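/- For all M, N ≥ 1, the following Cauchy identity holds in the formal power series ring K[[x_1,…,x_M,y_1,…,y_N]]: Σ_λ 2^{ℓ(λ)}·z_λ^{−1}·p^{(β)}_λ(x)·p^{[β]}_λ(y) = Π_{i=1}^M Π_{j=1}^N (1−x̄_i y_j)/(1−x_i y_j), where the sum runs over all odd partitions λ (including the empty partition, whose term is 1). The sum is summable in the formal power series topology because p^{(β)}_λ(x) has x-order |λ|. -/

import Mathlib

set_option linter.unusedSectionVars false
set_option linter.unusedVariables false
set_option maxHeartbeats 1000000
set_option synthInstance.maxHeartbeats 1000000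


/-!
Statement 3: the Cauchy identity
`Σ_{λ odd} 2^{ℓ(λ)} z_λ⁻¹ p^{(β)}_λ(x) p^{[β]}_λ(y) = Π_{i,j} (1−x̄_i y_j)/(1−x_i y_j)`
in `K[[x_1,…,x_M,y_1,…,y_N]]`, stated coefficientwise: for every monomial the
family of coefficients indexed by odd partitions has finite support and its sum
equals the corresponding coefficient of the right-hand side.
-/

noncomputable section

open scoped BigOperators

/-- The base field `K = ℚ(β)`. -/
abbrev K : Type := RatFunc ℚ

/-- The indeterminate `β`. -/
def β : K := RatFunc.X

variable (M N : ℕ)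

/-- The ambient power-series ring `K[[x_1,…,x_M,y_1,…,y_N]]`. -/
abbrev PS (M N : ℕ) := MvPowerSeries (Fin M ⊕ Fin N) K

/-- The variable `x_i`. -/
def xv (i : Fin M) : PS M N := MvPowerSeries.X (Sum.inl i)

/-- The variable `y_j`. -/
def yv (j : Fin N) : PS M N := MvPowerSeries.X (Sum.inr j)

/-- `p^{(β)}_n(x) = Σ_i x_i^n/(1+(β/2)x_i)^n`, each inverse expanded as a power
series (the unique inverse of a series with unit constant term). -/
def pBeta (n : ℕ) : PS M N :=
  ∑ i : Fin M, (xv M N i) ^ n *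
    (MvPowerSeries.invOfUnit (1 + MvPowerSeries.C (β / 2) * xv M N i) 1) ^ n

/-- `p^{[β]}_n(y) = Σ_j ((y_j+β/2)^n − (β/2)^n)`. -/
def pBracket (n : ℕ) : PS M N :=
  ∑ j : Fin N, ((yv M N j + MvPowerSeries.C (β / 2)) ^ n - MvPowerSeries.C ((β / 2) ^ n))

/-- An odd partition: a weakly decreasing list of odd (hence positive) parts. -/
def OddPartition : Type := {l : List ℕ // l.Chain' (· ≥ ·) ∧ ∀ a ∈ l, Odd a}

/-- `z_λ = Π_i i^{m_i}·m_i!` where `m_i` is the multiplicity of `i` in `λ`. -/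
def zlam (l : List ℕ) : K :=
  ∏ i ∈ l.toFinset, ((i : K) ^ (l.count i) * (l.count i).factorial)

/-- The summand `2^{ℓ(λ)} z_λ⁻¹ p^{(β)}_λ(x) p^{[β]}_λ(y)`. -/
def cauchyTerm (lam : OddPartition) : PS M N :=
  MvPowerSeries.C ((2 : K) ^ lam.1.length * (zlam lam.1)⁻¹) *
    (lam.1.map fun n => pBeta M N n).prod * (lam.1.map fun n => pBracket M N n).prod

/-- The right-hand side `Π_{i,j} (1−x̄_i y_j)/(1−x_i y_j)
  = Π_{i,j} (1+βx_i+x_i y_j)/((1+βx_i)(1−x_i y_j))`, inverses expanded as power series. -/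
def cauchyRHS : PS M N :=
  ∏ p : Fin M × Fin N,
    ((1 + MvPowerSeries.C β * xv M N p.1 + xv M N p.1 * yv M N p.2) *
      MvPowerSeries.invOfUnit (1 + MvPowerSeries.C β * xv M N p.1) 1 *
      MvPowerSeries.invOfUnit (1 - xv M N p.1 * yv M N p.2) 1)

instance : CharZero K := by
  constructor
  intro m n h
  have h2 : algebraMap (Polynomial ℚ) K (m : Polynomial ℚ) = algebraMap (Polynomial ℚ) K (n : Polynomial ℚ) := by
    simpa [map_natCast] using h
  have := RatFunc.algebraMap_injective (K := ℚ) h2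
  exact_mod_cast this

section ExpTheory

variable {A : Type} [CommRing A] [Algebra K A] (D : ℕ)

/-- truncated exponential -/
def texp (a : A) : A := ∑ k ∈ Finset.range (D + 1), algebraMap K A ((k.factorial : K)⁻¹) * a ^ k

/-- truncated logarithm series Σ_{n=1}^D t^n/n -/
def tlog (t : A) : A := ∑ n ∈ Finset.Icc 1 D, algebraMap K A ((n : K)⁻¹) * t ^ n

/-- odd truncated log: Σ_{n odd, 1≤n≤D} (2/n) t^n -/
def tlodd (t : A) : A :=
  ∑ n ∈ (Finset.Icc 1 D).filter (fun n => Odd n), algebraMap K A (2 / (n : K)) * t ^ n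

variable {I : Ideal A}

lemma pow_mul_pow_eq_zero (hI : I ^ (D + 1) = ⊥) {a b : A} (ha : a ∈ I) (hb : b ∈ I) {k l : ℕ} (h : D < k + l) :
    a ^ k * b ^ l = 0 := by
  have h1 : a ^ k * b ^ l ∈ I ^ (k + l) := by
    rw [pow_add]
    exact Ideal.mul_mem_mul (Ideal.pow_mem_pow ha k) (Ideal.pow_mem_pow hb l)
  have h2 : I ^ (k + l) ≤ I ^ (D + 1) := Ideal.pow_le_pow_right h
  rw [hI] at h2
  simpa using h2 h1

lemma pow_eq_zero_of_mem (hI : I ^ (D + 1) = ⊥) {a : A} (ha : a ∈ I) {k : ℕ} (h : D < k) : a ^ k = 0 := by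
  have := pow_mul_pow_eq_zero D hI ha ha (k := k) (l := 0) (by omega)
  simpa using this

lemma texp_zero : texp D (0 : A) = 1 := by
  rw [texp, Finset.sum_eq_single 0]
  · simp
  · intro k _ hk; simp [zero_pow hk]
  · simp

lemma tlog_mem {t : A} (ht : t ∈ I) : tlog D t ∈ I := by
  refine Ideal.sum_mem _ fun n hn => ?_
  rw [Finset.mem_Icc] at hn
  have : t ^ n ∈ I := by
    have : t ^ n = t ^ (n - 1) * t := by rw [← pow_succ]; congr 1; omega
    rw [this]; exact Ideal.mul_mem_left _ _ ht
  exact Ideal.mul_mem_left _ _ this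

lemma tlodd_mem {t : A} (ht : t ∈ I) : tlodd D t ∈ I := by
  refine Ideal.sum_mem _ fun n hn => ?_
  rw [Finset.mem_filter, Finset.mem_Icc] at hn
  have : t ^ n ∈ I := by
    have : t ^ n = t ^ (n - 1) * t := by rw [← pow_succ]; congr 1; omega
    rw [this]; exact Ideal.mul_mem_left _ _ ht
  exact Ideal.mul_mem_left _ _ this

lemma texp_add (hI : I ^ (D + 1) = ⊥) {a b : A} (ha : a ∈ I) (hb : b ∈ I) :
    texp D (a + b) = texp D a * texp D b := by
  classical
  have box : texp D a * texp D b
      = ∑ p ∈ Finset.range (D+1) ×ˢ Finset.range (D+1),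
          algebraMap K A ((p.1.factorial : K)⁻¹ * (p.2.factorial : K)⁻¹) * (a ^ p.1 * b ^ p.2) := by
    rw [texp, texp, Finset.sum_mul_sum]
    rw [Finset.sum_product]
    refine Finset.sum_congr rfl fun k _ => Finset.sum_congr rfl fun l _ => ?_
    rw [map_mul]; ring
  set T := (Finset.range (D+1) ×ˢ Finset.range (D+1)).filter (fun p => p.1 + p.2 ≤ D) with hT
  have boxT : texp D a * texp D b
      = ∑ p ∈ T, algebraMap K A ((p.1.factorial : K)⁻¹ * (p.2.factorial : K)⁻¹) * (a ^ p.1 * b ^ p.2) := by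
    rw [box, ← Finset.sum_filter_add_sum_filter_not _ (fun p => p.1 + p.2 ≤ D)]
    rw [← hT]
    have : ∀ p ∈ (Finset.range (D+1) ×ˢ Finset.range (D+1)).filter (fun p => ¬ p.1 + p.2 ≤ D),
        algebraMap K A ((p.1.factorial : K)⁻¹ * (p.2.factorial : K)⁻¹) * (a ^ p.1 * b ^ p.2) = 0 := by
      intro p hp
      rw [Finset.mem_filter] at hp
      rw [pow_mul_pow_eq_zero D hI ha hb (by omega), mul_zero]
    rw [Finset.sum_eq_zero this, add_zero]
  have lhs : texp D (a + b)
      = ∑ p ∈ T, algebraMap K A ((p.1.factorial : K)⁻¹ * (p.2.factorial : K)⁻¹) * (a ^ p.1 * b ^ p.2) := by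
    rw [texp]
    have expand : ∀ s : ℕ, algebraMap K A ((s.factorial : K)⁻¹) * (a + b) ^ s
        = ∑ k ∈ Finset.range (s+1),
            algebraMap K A ((k.factorial : K)⁻¹ * ((s-k).factorial : K)⁻¹) * (a ^ k * b ^ (s - k)) := by
      intro s
      rw [add_pow, Finset.mul_sum]
      refine Finset.sum_congr rfl fun k hk => ?_
      rw [Finset.mem_range] at hk
      have hks : k ≤ s := by omega
      have key : (s.factorial : K)⁻¹ * (s.choose k : K)
          = (k.factorial : K)⁻¹ * ((s-k).factorial : K)⁻¹ := by
        have h0 := Nat.choose_mul_factorial_mul_factorial hks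
        have hc : ((s.choose k : K)) * (k.factorial : K) * ((s-k).factorial : K) = (s.factorial : K) := by
          exact_mod_cast congrArg (Nat.cast : ℕ → K) h0
        have h1 : (s.factorial : K) ≠ 0 := Nat.cast_ne_zero.mpr (Nat.factorial_ne_zero s)
        have h2 : (k.factorial : K) ≠ 0 := Nat.cast_ne_zero.mpr (Nat.factorial_ne_zero k)
        have h3 : ((s-k).factorial : K) ≠ 0 := Nat.cast_ne_zero.mpr (Nat.factorial_ne_zero (s-k))
        field_simp
        linear_combination hc
      calc algebraMap K A ((s.factorial : K)⁻¹) * (a ^ k * b ^ (s-k) * (s.choose k : A))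
          = algebraMap K A ((s.factorial : K)⁻¹ * (s.choose k : K)) * (a ^ k * b ^ (s-k)) := by
            rw [map_mul, map_natCast]; ring
        _ = algebraMap K A ((k.factorial : K)⁻¹ * ((s-k).factorial : K)⁻¹) * (a ^ k * b ^ (s-k)) := by
            rw [key]
    calc ∑ s ∈ Finset.range (D+1), algebraMap K A ((s.factorial : K)⁻¹) * (a + b) ^ s
        = ∑ s ∈ Finset.range (D+1), ∑ k ∈ Finset.range (s+1),
            algebraMap K A ((k.factorial : K)⁻¹ * ((s-k).factorial : K)⁻¹) * (a ^ k * b ^ (s - k)) := by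
          exact Finset.sum_congr rfl fun s _ => expand s
      _ = ∑ p ∈ (Finset.range (D+1)).sigma (fun s => Finset.range (s+1)),
            algebraMap K A ((p.2.factorial : K)⁻¹ * ((p.1-p.2).factorial : K)⁻¹) * (a ^ p.2 * b ^ (p.1 - p.2)) := by
          rw [Finset.sum_sigma]
      _ = ∑ p ∈ T, algebraMap K A ((p.1.factorial : K)⁻¹ * (p.2.factorial : K)⁻¹) * (a ^ p.1 * b ^ p.2) := by
          refine Finset.sum_nbij' (fun p => (p.2, p.1 - p.2)) (fun p => ⟨p.1 + p.2, p.1⟩) ?_ ?_ ?_ ?_ ?_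
          · intro p hp
            simp only [Finset.mem_sigma, Finset.mem_range] at hp
            simp only [hT, Finset.mem_filter, Finset.mem_product, Finset.mem_range]
            omega
          · intro p hp
            simp only [hT, Finset.mem_filter, Finset.mem_product, Finset.mem_range] at hp
            simp only [Finset.mem_sigma, Finset.mem_range]
            omega
          · rintro ⟨s, k⟩ hp
            simp only [Finset.mem_sigma, Finset.mem_range] at hp
            have h : k + (s - k) = s := by omega
            simp only [h]
          · intro p hp; simp
          · intro p hp
            simp only [Finset.mem_sigma, Finset.mem_range] at hp
            rfl
  rw [lhs, boxT]

end ExpTheory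

namespace CauchyAux
open Polynomial

variable (D : ℕ)

/-- the truncated log polynomial -/
def gP : Polynomial K := ∑ n ∈ Finset.Icc 1 D, Polynomial.C ((n : K)⁻¹) * Polynomial.X ^ n

/-- the truncated exp of gP -/
def EP : Polynomial K := ∑ k ∈ Finset.range (D + 1), Polynomial.C ((k.factorial : K)⁻¹) * (gP D) ^ k

def PP : Polynomial K := (1 - Polynomial.X) * EP D

lemma gP_coeff_zero : (gP D).coeff 0 = 0 := by
  rw [gP, Polynomial.finset_sum_coeff]
  refine Finset.sum_eq_zero fun n hn => ?_
  rw [Finset.mem_Icc] at hn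
  rw [Polynomial.coeff_C_mul, Polynomial.coeff_X_pow, if_neg (by omega), mul_zero]

lemma gP_eq_X_mul : gP D = Polynomial.X * ∑ n ∈ Finset.Icc 1 D, Polynomial.C ((n : K)⁻¹) * Polynomial.X ^ (n - 1) := by
  rw [gP, Finset.mul_sum]
  refine Finset.sum_congr rfl fun n hn => ?_
  rw [Finset.mem_Icc] at hn
  have h : (Polynomial.X : Polynomial K) ^ n = Polynomial.X * Polynomial.X ^ (n-1) := by
    conv_lhs => rw [show n = (n-1)+1 by omega, pow_succ']
  rw [h]; ring

lemma gP_pow_coeff_lt {k r : ℕ} (h : r < k) : ((gP D) ^ k).coeff r = 0 := by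
  rw [gP_eq_X_mul, mul_pow, mul_comm, Polynomial.coeff_mul_X_pow']
  rw [if_neg (by omega)]

lemma derivative_gP : derivative (gP D) = ∑ j ∈ Finset.range D, Polynomial.X ^ j := by
  rw [gP, map_sum, ← Finset.Ico_add_one_right_eq_Icc, Finset.sum_Ico_eq_sum_range]
  refine Finset.sum_congr (by congr 1) fun j hj => ?_
  rw [Polynomial.derivative_C_mul_X_pow]
  have h1 : ((((1 + j : ℕ)) : K)⁻¹ * ((1 + j : ℕ) : K)) = 1 := by
    rw [inv_mul_cancel₀]
    exact Nat.cast_ne_zero.mpr (by omega)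
  rw [h1, map_one, one_mul]
  congr 1
  omega

lemma one_sub_X_mul_derivative_gP :
    (1 - Polynomial.X) * derivative (gP D) = 1 - Polynomial.X ^ D := by
  rw [derivative_gP]
  have := geom_sum_mul (Polynomial.X : Polynomial K) D
  linear_combination -this

lemma derivative_EP : derivative (EP D)
    = derivative (gP D) * ∑ k ∈ Finset.range D, Polynomial.C ((k.factorial : K)⁻¹) * (gP D) ^ k := by
  rw [EP, map_sum, Finset.sum_range_succ']
  have h0 : derivative (Polynomial.C (((0:ℕ).factorial : K)⁻¹) * (gP D) ^ 0) = 0 := by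
    simp
  rw [h0, add_zero, Finset.mul_sum]
  refine Finset.sum_congr rfl fun k hk => ?_
  rw [derivative_C_mul, Polynomial.derivative_pow]
  have hne : ((k : K) + 1) ≠ 0 := Nat.cast_add_one_ne_zero k
  have hfac : (((k+1).factorial : K)⁻¹ * (((k+1):ℕ) : K)) = ((k.factorial : K)⁻¹) := by
    rw [Nat.factorial_succ]
    push_cast
    rw [mul_inv, mul_comm ((k:K)+1)⁻¹, mul_assoc, inv_mul_cancel₀ hne, mul_one]
  calc Polynomial.C (((k+1).factorial : K)⁻¹) * (Polynomial.C (((k+1):ℕ) : K) * (gP D) ^ (k + 1 - 1) * derivative (gP D))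
      = derivative (gP D) * (Polynomial.C ((((k+1).factorial : K)⁻¹) * (((k+1):ℕ) : K)) * (gP D) ^ k) := by
        rw [Nat.add_sub_cancel, map_mul]; ring
    _ = derivative (gP D) * (Polynomial.C ((k.factorial : K)⁻¹) * (gP D) ^ k) := by rw [hfac]

end CauchyAux

namespace CauchyAux
open Polynomial

variable (D : ℕ)

def EP1 : Polynomial K := ∑ k ∈ Finset.range D, Polynomial.C ((k.factorial : K)⁻¹) * (gP D) ^ k

lemma EP_eq : EP D = EP1 D + Polynomial.C ((D.factorial : K)⁻¹) * (gP D) ^ D := by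
  rw [EP, Finset.sum_range_succ, EP1]

lemma derivative_PP : derivative (PP D)
    = -(Polynomial.C ((D.factorial : K)⁻¹) * (gP D) ^ D) - Polynomial.X ^ D * EP1 D := by
  rw [PP, derivative_mul, derivative_EP]
  have h1 : derivative (1 - Polynomial.X : Polynomial K) = -1 := by simp
  rw [h1]
  have h2 : (1 - Polynomial.X) * (derivative (gP D) * EP1 D)
      = (1 - Polynomial.X ^ D) * EP1 D := by
    rw [← mul_assoc, one_sub_X_mul_derivative_gP]
  rw [EP1] at h2 ⊢
  rw [h2, EP_eq, EP1]
  ring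

lemma PP_deriv_coeff_lt {r : ℕ} (h : r < D) : (derivative (PP D)).coeff r = 0 := by
  rw [derivative_PP]
  rw [Polynomial.coeff_sub, Polynomial.coeff_neg, Polynomial.coeff_C_mul]
  rw [gP_pow_coeff_lt D h, mul_zero, neg_zero, zero_sub, neg_eq_zero]
  rw [mul_comm, Polynomial.coeff_mul_X_pow', if_neg (by omega)]

lemma PP_coeff_zero : (PP D).coeff 0 = 1 := by
  rw [PP, Polynomial.mul_coeff_zero]
  have h1 : (1 - Polynomial.X : Polynomial K).coeff 0 = 1 := by simp
  have h2 : (EP D).coeff 0 = 1 := by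
    rw [EP, Polynomial.finset_sum_coeff]
    rw [Finset.sum_eq_single 0]
    · simp
    · intro k _ hk
      rw [Polynomial.coeff_C_mul]
      have : ((gP D) ^ k).coeff 0 = ((gP D).coeff 0) ^ k := by
        rw [← Polynomial.constantCoeff_apply, map_pow, Polynomial.constantCoeff_apply]
      rw [this, gP_coeff_zero, zero_pow hk, mul_zero]
    · simp
  rw [h1, h2, mul_one]

lemma PP_coeff_eq_zero {r : ℕ} (h1 : 1 ≤ r) (h2 : r ≤ D) : (PP D).coeff r = 0 := by
  have hd := Polynomial.coeff_derivative (PP D) (r - 1)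
  rw [PP_deriv_coeff_lt D (by omega)] at hd
  have hr : r - 1 + 1 = r := by omega
  rw [hr] at hd
  have hne : (((r-1 : ℕ) : K) + 1) ≠ 0 := Nat.cast_add_one_ne_zero _
  have := hd.symm
  rcases mul_eq_zero.mp this with h | h
  · exact h
  · exact absurd h hne

end CauchyAux

section ExpTheory2
variable {A : Type} [CommRing A] [Algebra K A] (D : ℕ) {I : Ideal A}

lemma aeval_gP (t : A) : Polynomial.aeval t (CauchyAux.gP D) = tlog D t := by
  rw [CauchyAux.gP, tlog, map_sum]
  refine Finset.sum_congr rfl fun n _ => ?_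
  simp [Polynomial.aeval_C]

lemma aeval_EP (t : A) : Polynomial.aeval t (CauchyAux.EP D) = texp D (tlog D t) := by
  rw [CauchyAux.EP, texp, map_sum]
  refine Finset.sum_congr rfl fun k _ => ?_
  simp [Polynomial.aeval_C, aeval_gP]

lemma one_sub_mul_texp_tlog (hI : I ^ (D + 1) = ⊥) {t : A} (ht : t ∈ I) :
    (1 - t) * texp D (tlog D t) = 1 := by
  have key : Polynomial.aeval t (CauchyAux.PP D) = (1 - t) * texp D (tlog D t) := by
    rw [CauchyAux.PP, map_mul, map_sub, map_one, Polynomial.aeval_X, aeval_EP]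
  rw [← key, Polynomial.aeval_eq_sum_range]
  rw [Finset.sum_eq_single 0]
  · rw [CauchyAux.PP_coeff_zero, pow_zero, one_smul]
  · intro r hr hr0
    rcases le_or_gt r D with h | h
    · rw [CauchyAux.PP_coeff_eq_zero D (by omega) h, zero_smul]
    · rw [pow_eq_zero_of_mem D hI ht h, smul_zero]
  · intro h
    exact absurd (Finset.mem_range.mpr (Nat.succ_pos _)) h

lemma tlog_decomp (t : A) : tlog D t = tlog D (-t) + tlodd D t := by
  have key : tlog D t - tlog D (-t) = tlodd D t := by
    rw [tlog, tlog, ← Finset.sum_sub_distrib, tlodd]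
    rw [← Finset.sum_filter_add_sum_filter_not (Finset.Icc 1 D) (fun n => Odd n)
      (fun n => algebraMap K A ((n : K)⁻¹) * t ^ n - algebraMap K A ((n : K)⁻¹) * (-t) ^ n)]
    have h2 : ∑ n ∈ (Finset.Icc 1 D).filter (fun n => ¬ Odd n),
        (algebraMap K A ((n : K)⁻¹) * t ^ n - algebraMap K A ((n : K)⁻¹) * (-t) ^ n) = 0 := by
      refine Finset.sum_eq_zero fun n hn => ?_
      rw [Finset.mem_filter] at hn
      rw [(Nat.not_odd_iff_even.mp hn.2).neg_pow, sub_self]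
    rw [h2, add_zero]
    refine Finset.sum_congr rfl fun n hn => ?_
    rw [Finset.mem_filter] at hn
    rw [hn.2.neg_pow]
    have : (2 / (n : K)) = (n : K)⁻¹ + (n : K)⁻¹ := by ring
    rw [this, map_add]
    ring
  linear_combination key

lemma texp_mul_texp_neg (hI : I ^ (D + 1) = ⊥) {a : A} (ha : a ∈ I) :
    texp D a * texp D (-a) = 1 := by
  rw [← texp_add D hI ha (neg_mem ha), add_neg_cancel, texp_zero]

lemma one_sub_mul_texp_tlodd (hI : I ^ (D + 1) = ⊥) {t : A} (ht : t ∈ I) :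
    (1 - t) * texp D (tlodd D t) = 1 + t := by
  have h1 : (1 - t) * texp D (tlog D t) = 1 := one_sub_mul_texp_tlog D hI ht
  have h2 : (1 + t) * texp D (tlog D (-t)) = 1 := by
    have := one_sub_mul_texp_tlog D hI (neg_mem ht)
    rwa [sub_neg_eq_add] at this
  have h3 : texp D (tlog D t) = texp D (tlog D (-t)) * texp D (tlodd D t) := by
    rw [tlog_decomp D t]
    exact texp_add D hI (tlog_mem D (neg_mem ht)) (tlodd_mem D ht)
  calc (1 - t) * texp D (tlodd D t)
      = ((1 + t) * texp D (tlog D (-t))) * ((1 - t) * texp D (tlodd D t)) := by rw [h2, one_mul]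
    _ = (1 + t) * ((1 - t) * (texp D (tlog D (-t)) * texp D (tlodd D t))) := by ring
    _ = (1 + t) * ((1 - t) * texp D (tlog D t)) := by rw [← h3]
    _ = 1 + t := by rw [h1, mul_one]

lemma texp_finset_sum (hI : I ^ (D + 1) = ⊥) {ι : Type} (s : Finset ι) (f : ι → A)
    (hf : ∀ i ∈ s, f i ∈ I) : texp D (∑ i ∈ s, f i) = ∏ i ∈ s, texp D (f i) := by
  classical
  induction s using Finset.induction_on with
  | empty => simp [texp_zero]
  | insert a s hm ih =>
    rw [Finset.sum_insert hm, Finset.prod_insert hm]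
    rw [texp_add D hI (hf a (Finset.mem_insert_self a s))
      (Ideal.sum_mem _ fun i hi => hf i (Finset.mem_insert_of_mem hi))]
    rw [ih (fun i hi => hf i (Finset.mem_insert_of_mem hi))]

end ExpTheory2

section PSide

variable (M N : ℕ)

/-- total degree of an exponent -/
def deg (e : (Fin M ⊕ Fin N) →₀ ℕ) : ℕ := e.sum fun _ n => n

lemma deg_add (a b : (Fin M ⊕ Fin N) →₀ ℕ) : deg M N (a + b) = deg M N a + deg M N b :=
  Finsupp.sum_add_index' (fun _ => rfl) (fun _ _ _ => rfl)

/-- the ideal of power series of order at least k -/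
def od (k : ℕ) : Ideal (PS M N) where
  carrier := {f | ∀ e, deg M N e < k → MvPowerSeries.coeff e f = 0}
  zero_mem' := fun e _ => by simp
  add_mem' := by
    intro a b ha hb e he
    rw [map_add, ha e he, hb e he, add_zero]
  smul_mem' := by
    intro c f hf e he
    rw [smul_eq_mul, MvPowerSeries.coeff_mul]
    refine Finset.sum_eq_zero fun p hp => ?_
    rw [Finset.HasAntidiagonal.mem_antidiagonal] at hp
    have : deg M N p.2 < k := by
      have := deg_add M N p.1 p.2
      rw [hp] at this
      omega
    rw [hf p.2 this, mul_zero]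

lemma mul_mem_od {a b : ℕ} {f g : PS M N} (hf : f ∈ od M N a) (hg : g ∈ od M N b) :
    f * g ∈ od M N (a + b) := by
  intro e he
  rw [MvPowerSeries.coeff_mul]
  refine Finset.sum_eq_zero fun p hp => ?_
  rw [Finset.HasAntidiagonal.mem_antidiagonal] at hp
  have hd : deg M N p.1 + deg M N p.2 < a + b := by
    have := deg_add M N p.1 p.2
    rw [hp] at this
    omega
  rcases lt_or_ge (deg M N p.1) a with h | h
  · rw [hf p.1 h, zero_mul]
  · rw [hg p.2 (by omega), mul_zero]

lemma X_mem_od1 (s : Fin M ⊕ Fin N) : (MvPowerSeries.X s : PS M N) ∈ od M N 1 := by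
  intro e he
  rw [MvPowerSeries.coeff_X]
  have : e ≠ Finsupp.single s 1 := by
    intro h
    rw [h] at he
    have : deg M N (Finsupp.single s 1) = 1 := by
      rw [deg, Finsupp.sum_single_index rfl]
    omega
  rw [if_neg this]

lemma pow_mem_od {f : PS M N} (hf : f ∈ od M N 1) (n : ℕ) : f ^ n ∈ od M N n := by
  induction n with
  | zero => intro e he; omega
  | succ k ih =>
    rw [pow_succ]
    exact mul_mem_od M N ih hf

lemma od_anti {a b : ℕ} (h : a ≤ b) : od M N b ≤ od M N a := by
  intro f hf e he
  exact hf e (by omega)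

lemma od_pow_le (k : ℕ) : (od M N 1) ^ k ≤ od M N k := by
  induction k with
  | zero => rw [pow_zero, Ideal.one_eq_top]; intro f _ e he; omega
  | succ n ih =>
    rw [pow_succ]
    refine Ideal.mul_le.mpr fun f hf g hg => ?_
    exact mul_mem_od M N (ih hf) hg

end PSide

section QSide

variable (M N D : ℕ)

abbrev Rq := PS M N ⧸ (od M N (D + 1))

def qm : PS M N →+* Rq M N D := Ideal.Quotient.mk _

example : Algebra K (Rq M N D) := inferInstance

lemma qm_algebraMap (c : K) : qm M N D (MvPowerSeries.C c) = algebraMap K (Rq M N D) c := by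
  rfl

def I1 : Ideal (Rq M N D) := (od M N 1).map (qm M N D)

lemma I1_pow_eq_bot : (I1 M N D) ^ (D + 1) = ⊥ := by
  rw [I1, ← Ideal.map_pow]
  rw [← le_bot_iff]
  calc Ideal.map (qm M N D) ((od M N 1) ^ (D+1)) ≤ Ideal.map (qm M N D) (od M N (D+1)) :=
        Ideal.map_mono (od_pow_le M N (D+1))
    _ = ⊥ := Ideal.map_quotient_self _

lemma mem_I1 {f : PS M N} (hf : f ∈ od M N 1) : qm M N D f ∈ I1 M N D :=
  Ideal.mem_map_of_mem _ hf

lemma qm_eq_of_sub_mem {f g : PS M N} (h : f - g ∈ od M N (D + 1)) :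
    qm M N D f = qm M N D g := by
  rw [qm, Ideal.Quotient.mk_eq_mk_iff_sub_mem]
  exact h

lemma coeff_eq_of_qm_eq {f g : PS M N} (d : (Fin M ⊕ Fin N) →₀ ℕ) (hd : deg M N d = D)
    (h : qm M N D f = qm M N D g) : MvPowerSeries.coeff d f = MvPowerSeries.coeff d g := by
  rw [qm, Ideal.Quotient.mk_eq_mk_iff_sub_mem] at h
  have := h d (by omega)
  rw [map_sub] at this
  exact sub_eq_zero.mp this

end QSide

section ExpTheory3
variable {A : Type} [CommRing A] [Algebra K A] (D : ℕ) {I : Ideal A}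

lemma factor_eq_texp (hI : I ^ (D + 1) = ⊥) {w v F : A} (hw : w ∈ I) (hv : v ∈ I)
    (hF : F * ((1 - w) * (1 + v)) = (1 + w) * (1 - v)) :
    F = texp D (tlodd D w - tlodd D v) := by
  have e1 : (1 - w) * texp D (tlodd D w) = 1 + w := one_sub_mul_texp_tlodd D hI hw
  have e2 : (1 - v) * texp D (tlodd D v) = 1 + v := one_sub_mul_texp_tlodd D hI hv
  have e3 : (1 + w) * texp D (tlog D (-w)) = 1 := by
    have := one_sub_mul_texp_tlog D hI (neg_mem hw)
    rwa [sub_neg_eq_add] at this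
  have e4 : (1 + v) * texp D (tlog D (-v)) = 1 := by
    have := one_sub_mul_texp_tlog D hI (neg_mem hv)
    rwa [sub_neg_eq_add] at this
  have e5 : texp D (tlodd D v) * texp D (-(tlodd D v)) = 1 :=
    texp_mul_texp_neg D hI (tlodd_mem D hv)
  set Lw := texp D (tlodd D w)
  set Lv := texp D (tlodd D v)
  set Tw := texp D (tlog D (-w))
  set Tv := texp D (tlog D (-v))
  have hL : F * ((1 - w) * (1 + v)) * (Lw * Lv * Tw * Tv) = (1 + w) * (1 - v) * (Lw * Lv * Tw * Tv) := by
    rw [hF]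
  have hLHS : F * ((1 - w) * (1 + v)) * (Lw * Lv * Tw * Tv) = F * Lv := by
    calc F * ((1 - w) * (1 + v)) * (Lw * Lv * Tw * Tv)
        = F * (((1 - w) * Lw) * ((1 + v) * Tv) * Lv * Tw) := by ring
      _ = F * ((1 + w) * 1 * Lv * Tw) := by rw [e1, e4]
      _ = F * Lv * ((1 + w) * Tw) := by ring
      _ = F * Lv := by rw [e3, mul_one]
  have hRHS : (1 + w) * (1 - v) * (Lw * Lv * Tw * Tv) = Lw := by
    calc (1 + w) * (1 - v) * (Lw * Lv * Tw * Tv)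
        = ((1 + w) * Tw) * ((1 - v) * Lv) * Lw * Tv := by ring
      _ = 1 * (1 + v) * Lw * Tv := by rw [e3, e2]
      _ = Lw * ((1 + v) * Tv) := by ring
      _ = Lw := by rw [e4, mul_one]
  have key : F * Lv = Lw := by rw [← hLHS, hL, hRHS]
  calc F = F * (Lv * texp D (-(tlodd D v))) := by rw [e5, mul_one]
    _ = (F * Lv) * texp D (-(tlodd D v)) := by ring
    _ = Lw * texp D (-(tlodd D v)) := by rw [key]
    _ = texp D (tlodd D w + -(tlodd D v)) := by
        rw [texp_add D hI (tlodd_mem D hw) (neg_mem (tlodd_mem D hv))]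
    _ = texp D (tlodd D w - tlodd D v) := by rw [← sub_eq_add_neg]

end ExpTheory3

section ChainA
variable (M N D : ℕ)

def Gfac (i : Fin M) : PS M N :=
  MvPowerSeries.invOfUnit (1 + MvPowerSeries.C (β / 2) * xv M N i) 1

lemma const_one_add (c : K) (s : Fin M ⊕ Fin N) :
    MvPowerSeries.constantCoeff (1 + MvPowerSeries.C c * MvPowerSeries.X s : PS M N)
      = (1 : Kˣ) := by
  simp [MvPowerSeries.constantCoeff_X]

lemma Gfac_rel (i : Fin M) :
    (1 + MvPowerSeries.C (β / 2) * xv M N i) * Gfac M N i = 1 :=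
  MvPowerSeries.mul_invOfUnit _ 1 (const_one_add M N (β/2) (Sum.inl i))

def Hfac (i : Fin M) : PS M N :=
  MvPowerSeries.invOfUnit (1 + MvPowerSeries.C β * xv M N i) 1

lemma Hfac_rel (i : Fin M) :
    (1 + MvPowerSeries.C β * xv M N i) * Hfac M N i = 1 :=
  MvPowerSeries.mul_invOfUnit _ 1 (const_one_add M N β (Sum.inl i))

def Kfac (i : Fin M) (j : Fin N) : PS M N :=
  MvPowerSeries.invOfUnit (1 - xv M N i * yv M N j) 1

lemma Kfac_rel (i : Fin M) (j : Fin N) :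
    (1 - xv M N i * yv M N j) * Kfac M N i j = 1 := by
  refine MvPowerSeries.mul_invOfUnit _ 1 ?_
  have : (1 - xv M N i * yv M N j : PS M N)
      = 1 + MvPowerSeries.C (-1) * (MvPowerSeries.X (Sum.inl i) * MvPowerSeries.X (Sum.inr j)) := by
    rw [map_neg, map_one, xv, yv]; ring
  rw [this]
  simp [MvPowerSeries.constantCoeff_X]

/-- one factor of the RHS -/
def cfactor (i : Fin M) (j : Fin N) : PS M N :=
  (1 + MvPowerSeries.C β * xv M N i + xv M N i * yv M N j) * Hfac M N i * Kfac M N i j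

def Uw (i : Fin M) (j : Fin N) : PS M N :=
  (xv M N i * Gfac M N i) * (yv M N j + MvPowerSeries.C (β / 2))

def Uv (i : Fin M) : PS M N := (xv M N i * Gfac M N i) * MvPowerSeries.C (β / 2)

lemma hbeta : (MvPowerSeries.C β : PS M N)
    = MvPowerSeries.C (β / 2) + MvPowerSeries.C (β / 2) := by
  rw [← map_add]; congr 1; ring

lemma cfactor_A1' (i : Fin M) (j : Fin N) :
    cfactor M N i j * (1 - xv M N i * yv M N j) * (1 + MvPowerSeries.C β * xv M N i)
      = 1 + MvPowerSeries.C β * xv M N i + xv M N i * yv M N j := by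
  have r1 := Hfac_rel M N i
  have r2 := Kfac_rel M N i j
  rw [cfactor]
  linear_combination ((1 + MvPowerSeries.C β * xv M N i + xv M N i * yv M N j) *
      Kfac M N i j * (1 - xv M N i * yv M N j)) * r1 +
    (1 + MvPowerSeries.C β * xv M N i + xv M N i * yv M N j) * r2

lemma h4 (i : Fin M) (j : Fin N) :
    (1 - Uw M N i j) = (1 - xv M N i * yv M N j) * Gfac M N i := by
  have r3 := Gfac_rel M N i
  rw [Uw]
  linear_combination -r3

lemma h5 (i : Fin M) :
    (1 + Uv M N i) = (1 + MvPowerSeries.C β * xv M N i) * Gfac M N i := by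
  have r3 := Gfac_rel M N i
  rw [Uv, hbeta]
  linear_combination -r3

lemma h6 (i : Fin M) (j : Fin N) :
    (1 + Uw M N i j) = (1 + MvPowerSeries.C β * xv M N i + xv M N i * yv M N j) * Gfac M N i := by
  have r3 := Gfac_rel M N i
  rw [Uw, hbeta]
  linear_combination -r3

lemma h7 (i : Fin M) :
    (1 - Uv M N i) = Gfac M N i := by
  have r3 := Gfac_rel M N i
  rw [Uv]
  linear_combination -r3

lemma cfactor_A1 (i : Fin M) (j : Fin N) :
    cfactor M N i j * ((1 - Uw M N i j) * (1 + Uv M N i))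
      = (1 + Uw M N i j) * (1 - Uv M N i) := by
  calc cfactor M N i j * ((1 - Uw M N i j) * (1 + Uv M N i))
      = (cfactor M N i j * (1 - xv M N i * yv M N j) * (1 + MvPowerSeries.C β * xv M N i))
          * (Gfac M N i * Gfac M N i) := by
        rw [h4, h5]; ring
    _ = (1 + MvPowerSeries.C β * xv M N i + xv M N i * yv M N j) * (Gfac M N i * Gfac M N i) := by
        rw [cfactor_A1']
    _ = (1 + Uw M N i j) * (1 - Uv M N i) := by rw [h6, h7]; ring

end ChainA

section ChainARq
variable (M N D : ℕ)

def oddF (D : ℕ) : Finset ℕ := (Finset.Icc 1 D).filter (fun n => Odd n)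

def uR (i : Fin M) : Rq M N D := qm M N D (xv M N i * Gfac M N i)

def aR (j : Fin N) : Rq M N D := qm M N D (yv M N j + MvPowerSeries.C (β / 2))

def b0R : Rq M N D := qm M N D (MvPowerSeries.C (β / 2))

def PB (n : ℕ) : Rq M N D := qm M N D (pBeta M N n)
def QB (n : ℕ) : Rq M N D := qm M N D (pBracket M N n)

def cR (n : ℕ) : Rq M N D := algebraMap K (Rq M N D) (2 / (n : K)) * (PB M N D n * QB M N D n)

lemma uR_mem (i : Fin M) : uR M N D i ∈ I1 M N D := by
  refine mem_I1 M N D (Ideal.mul_mem_right _ _ ?_)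
  exact X_mem_od1 M N (Sum.inl i)

lemma wR_mem (i : Fin M) (j : Fin N) : uR M N D i * aR M N D j ∈ I1 M N D :=
  Ideal.mul_mem_right _ _ (uR_mem M N D i)

lemma vR_mem (i : Fin M) : uR M N D i * b0R M N D ∈ I1 M N D :=
  Ideal.mul_mem_right _ _ (uR_mem M N D i)

lemma qm_Uw (i : Fin M) (j : Fin N) : qm M N D (Uw M N i j) = uR M N D i * aR M N D j := by
  rw [Uw, map_mul]; rfl

lemma qm_Uv (i : Fin M) : qm M N D (Uv M N i) = uR M N D i * b0R M N D := by
  rw [Uv, map_mul]; rfl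

lemma qm_cfactor (i : Fin M) (j : Fin N) :
    qm M N D (cfactor M N i j)
      = texp D (tlodd D (uR M N D i * aR M N D j) - tlodd D (uR M N D i * b0R M N D)) := by
  refine factor_eq_texp D (I1_pow_eq_bot M N D) (wR_mem M N D i j) (vR_mem M N D i) ?_
  have h := congrArg (qm M N D) (cfactor_A1 M N i j)
  rw [map_mul, map_mul, map_mul, map_sub, map_add, map_sub, map_add, map_one] at h
  rw [qm_Uw, qm_Uv] at h
  exact h

lemma PB_eq (n : ℕ) : PB M N D n = ∑ i : Fin M, (uR M N D i) ^ n := by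
  rw [PB, pBeta, map_sum]
  refine Finset.sum_congr rfl fun i _ => ?_
  rw [uR, ← map_pow, ← mul_pow]
  rfl

lemma QB_eq (n : ℕ) : QB M N D n = ∑ j : Fin N, ((aR M N D j) ^ n - (b0R M N D) ^ n) := by
  rw [QB, pBracket, map_sum]
  refine Finset.sum_congr rfl fun j _ => ?_
  rw [aR, b0R, ← map_pow, ← map_pow, map_sub]
  congr 2
  rw [map_pow]

lemma sum_tlodd_eq : ∑ p : Fin M × Fin N,
      (tlodd D (uR M N D p.1 * aR M N D p.2) - tlodd D (uR M N D p.1 * b0R M N D))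
    = ∑ n ∈ oddF D, cR M N D n := by
  have hterm : ∀ (i : Fin M) (j : Fin N),
      tlodd D (uR M N D i * aR M N D j) - tlodd D (uR M N D i * b0R M N D)
        = ∑ n ∈ oddF D, algebraMap K (Rq M N D) (2 / (n : K)) *
            ((uR M N D i) ^ n * ((aR M N D j) ^ n - (b0R M N D) ^ n)) := by
    intro i j
    rw [tlodd, tlodd, ← Finset.sum_sub_distrib]
    refine Finset.sum_congr rfl fun n _ => ?_
    rw [mul_pow, mul_pow]
    ring
  calc ∑ p : Fin M × Fin N,
      (tlodd D (uR M N D p.1 * aR M N D p.2) - tlodd D (uR M N D p.1 * b0R M N D))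
      = ∑ p : Fin M × Fin N, ∑ n ∈ oddF D, algebraMap K (Rq M N D) (2 / (n : K)) *
            ((uR M N D p.1) ^ n * ((aR M N D p.2) ^ n - (b0R M N D) ^ n)) := by
        refine Finset.sum_congr rfl fun p _ => hterm p.1 p.2
    _ = ∑ n ∈ oddF D, ∑ p : Fin M × Fin N, algebraMap K (Rq M N D) (2 / (n : K)) *
            ((uR M N D p.1) ^ n * ((aR M N D p.2) ^ n - (b0R M N D) ^ n)) := by
        rw [Finset.sum_comm]
    _ = ∑ n ∈ oddF D, cR M N D n := by
        refine Finset.sum_congr rfl fun n _ => ?_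
        rw [cR, PB_eq, QB_eq, Finset.sum_mul_sum, Finset.mul_sum,
          ← Finset.univ_product_univ, Finset.sum_product]
        dsimp only
        refine Finset.sum_congr rfl fun i _ => ?_
        rw [Finset.mul_sum]

lemma pBeta_mem_od (n : ℕ) : pBeta M N n ∈ od M N n := by
  refine Ideal.sum_mem _ fun i _ => ?_
  exact Ideal.mul_mem_right _ _ (pow_mem_od M N (X_mem_od1 M N (Sum.inl i)) n)

lemma cR_mem (n : ℕ) (hn : n ∈ oddF D) : cR M N D n ∈ I1 M N D := by
  rw [oddF, Finset.mem_filter, Finset.mem_Icc] at hn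
  refine Ideal.mul_mem_left _ _ (Ideal.mul_mem_right _ _ ?_)
  rw [PB]
  exact mem_I1 M N D (od_anti M N (by omega) (pBeta_mem_od M N n))

lemma qm_cauchyRHS : qm M N D (cauchyRHS M N) = texp D (∑ n ∈ oddF D, cR M N D n) := by
  rw [cauchyRHS, map_prod]
  have hfac : ∀ p : Fin M × Fin N,
      qm M N D ((1 + MvPowerSeries.C β * xv M N p.1 + xv M N p.1 * yv M N p.2) *
        MvPowerSeries.invOfUnit (1 + MvPowerSeries.C β * xv M N p.1) 1 *
        MvPowerSeries.invOfUnit (1 - xv M N p.1 * yv M N p.2) 1)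
      = texp D (tlodd D (uR M N D p.1 * aR M N D p.2) - tlodd D (uR M N D p.1 * b0R M N D)) := by
    intro p
    rw [← qm_cfactor]
    rfl
  rw [Finset.prod_congr rfl fun p _ => hfac p]
  rw [← texp_finset_sum D (I1_pow_eq_bot M N D) _ _ ?_]
  · rw [sum_tlodd_eq]
  · intro p _
    exact sub_mem (tlodd_mem D (wR_mem M N D p.1 p.2)) (tlodd_mem D (vR_mem M N D p.1))

end ChainARq

section ChainB
variable (D : ℕ)

def oddLst (D : ℕ) : List ℕ := (oddF D).sort (· ≥ ·)

def phiL (m : ℕ → ℕ) : List ℕ := (((oddLst D).map (fun n => List.replicate (m n) n)).flatten)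

lemma phiL_sorted (m : ℕ → ℕ) : List.Pairwise (· ≥ ·) (phiL D m) := by
  rw [phiL, List.pairwise_flatten]
  refine ⟨?_, ?_⟩
  · intro l hl
    rw [List.mem_map] at hl
    obtain ⟨n, _, rfl⟩ := hl
    exact List.pairwise_replicate.mpr (Or.inr le_rfl)
  · rw [List.pairwise_map]
    have hs : List.Pairwise (· ≥ ·) (oddLst D) := Finset.pairwise_sort _ _
    refine hs.imp_of_mem ?_
    intro a b _ _ hab x hx y hy
    rw [List.eq_of_mem_replicate hx, List.eq_of_mem_replicate hy]
    exact hab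

lemma phiL_mem {m : ℕ → ℕ} {a : ℕ} (ha : a ∈ phiL D m) : a ∈ oddF D := by
  rw [phiL, List.mem_flatten] at ha
  obtain ⟨l, hl, hal⟩ := ha
  rw [List.mem_map] at hl
  obtain ⟨n, hn, rfl⟩ := hl
  rw [List.eq_of_mem_replicate hal]
  rw [oddLst, Finset.mem_sort] at hn
  exact hn

lemma phiL_odd (m : ℕ → ℕ) : ∀ a ∈ phiL D m, Odd a := by
  intro a ha
  have := phiL_mem D ha
  rw [oddF, Finset.mem_filter] at this
  exact this.2

def phiP (m : ℕ → ℕ) : OddPartition :=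
  ⟨phiL D m, List.isChain_iff_pairwise.mpr (phiL_sorted D m), phiL_odd D m⟩

lemma phiL_count (m : ℕ → ℕ) (a : ℕ) :
    (phiL D m).count a = if a ∈ oddF D then m a else 0 := by
  rw [phiL, List.count_flatten, List.map_map]
  have hmap : ∀ n, (List.count a ∘ fun n => List.replicate (m n) n) n
      = (fun n => if a = n then m n else 0) n := by
    intro n
    simp only [Function.comp_apply, List.count_replicate, beq_iff_eq]
    by_cases h : n = a
    · subst h; simp
    · rw [if_neg h, if_neg (fun hh => h hh.symm)]
  rw [List.map_congr_left fun n _ => hmap n]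
  by_cases ha : a ∈ oddF D
  · rw [if_pos ha]
    have : a ∈ oddLst D := by rw [oddLst, Finset.mem_sort]; exact ha
    -- sum over the list with exactly one nonzero entry
    have hnd : (oddLst D).Nodup := Finset.sort_nodup _ _
    rw [← Multiset.sum_coe]
    have hco : ((oddLst D).map fun n => if a = n then m n else 0 : Multiset ℕ)
        = Multiset.map (fun n => if a = n then m n else 0) (oddF D).val := by
      rw [← Multiset.map_coe, oddLst, Finset.sort_eq]
    rw [hco, ← Finset.sum_eq_multiset_sum]
    rw [Finset.sum_eq_single a]
    · rw [if_pos rfl]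
    · intro b _ hb; rw [if_neg (fun h => hb h.symm)]
    · intro h; exact absurd ha h
  · rw [if_neg ha]
    refine List.sum_eq_zero fun x hx => ?_
    rw [List.mem_map] at hx
    obtain ⟨n, hn, rfl⟩ := hx
    have hno : n ∈ oddF D := by rw [oddLst, Finset.mem_sort] at hn; exact hn
    rw [if_neg]
    intro h; rw [h] at ha; exact ha hno

end ChainB

section ChainB2
variable (D : ℕ)

lemma length_le_sum_of_one_le : ∀ (l : List ℕ), (∀ a ∈ l, 1 ≤ a) → l.length ≤ l.sum := by
  intro l
  induction l with
  | nil => intro _; simp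
  | cons a t ih =>
    intro h
    rw [List.length_cons, List.sum_cons]
    have ha := h a List.mem_cons_self
    have := ih (fun b hb => h b (List.mem_cons_of_mem a hb))
    omega

lemma part_mem_oddF {lam : OddPartition} (h : lam.1.sum ≤ D) {a : ℕ} (ha : a ∈ lam.1) :
    a ∈ oddF D := by
  have hodd := lam.2.2 a ha
  have h1 : 1 ≤ a := by
    rcases hodd with ⟨k, hk⟩; omega
  have h2 : a ≤ lam.1.sum := List.single_le_sum (fun x _ => Nat.zero_le x) a ha
  rw [oddF, Finset.mem_filter, Finset.mem_Icc]
  exact ⟨⟨h1, by omega⟩, hodd⟩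

lemma eq_phiP (lam : OddPartition) (h : lam.1.sum ≤ D) :
    lam = phiP D (fun n => lam.1.count n) := by
  refine Subtype.ext ?_
  refine List.Perm.eq_of_pairwise' (List.isChain_iff_pairwise.mp lam.2.1) (phiL_sorted D _) ?_
  rw [List.perm_iff_count]
  intro a
  have hc : ((phiP D fun n => lam.1.count n) : OddPartition).1 = phiL D (fun n => lam.1.count n) := rfl
  rw [hc, phiL_count]
  by_cases ha : a ∈ oddF D
  · rw [if_pos ha]
  · rw [if_neg ha]
    rw [List.count_eq_zero]
    intro hmem
    exact ha (part_mem_oddF D h hmem)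

lemma sort_map_prod {Mo : Type} [CommMonoid Mo] (s : Finset ℕ) (f : ℕ → Mo) :
    (((s.sort (· ≥ ·)).map f)).prod = ∏ n ∈ s, f n := by
  rw [Finset.prod_eq_multiset_prod, ← Finset.sort_eq s (· ≥ ·), Multiset.map_coe,
    Multiset.prod_coe]

lemma sort_map_sum (s : Finset ℕ) (f : ℕ → ℕ) :
    (((s.sort (· ≥ ·)).map f)).sum = ∑ n ∈ s, f n := by
  rw [Finset.sum_eq_multiset_sum, ← Finset.sort_eq s (· ≥ ·), Multiset.map_coe,
    Multiset.sum_coe]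

lemma phiL_map_prod {Mo : Type} [CommMonoid Mo] (m : ℕ → ℕ) (f : ℕ → Mo) :
    (((phiL D m).map f)).prod = ∏ n ∈ oddF D, f n ^ m n := by
  rw [phiL, List.map_flatten, List.map_map, List.prod_flatten, List.map_map]
  rw [show (List.prod ∘ List.map f ∘ fun n => List.replicate (m n) n) = fun n => (f n) ^ m n from ?_]
  · exact sort_map_prod (oddF D) _
  · funext n
    simp only [Function.comp_apply, List.map_replicate, List.prod_replicate]

lemma phiL_length (m : ℕ → ℕ) : (phiL D m).length = ∑ n ∈ oddF D, m n := by
  rw [phiL, List.length_flatten, List.map_map]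
  rw [show (List.length ∘ fun n => List.replicate (m n) n) = fun n => m n from ?_]
  · exact sort_map_sum (oddF D) _
  · funext n
    simp

lemma phiL_sum (m : ℕ → ℕ) : (phiL D m).sum = ∑ n ∈ oddF D, m n * n := by
  rw [phiL, List.sum_flatten, List.map_map]
  rw [show (List.sum ∘ fun n => List.replicate (m n) n) = fun n => m n * n from ?_]
  · exact sort_map_sum (oddF D) _
  · funext n
    simp [List.sum_replicate, smul_eq_mul]

end ChainB2

section ChainB3
variable (M N D : ℕ)

lemma zlam_phiL (m : ℕ → ℕ) :
    zlam (phiL D m) = ∏ n ∈ oddF D, ((n : K) ^ (m n) * ((m n).factorial : K)) := by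
  rw [zlam]
  have hsub : (phiL D m).toFinset ⊆ oddF D := by
    intro a ha
    rw [List.mem_toFinset] at ha
    exact phiL_mem D ha
  rw [Finset.prod_subset hsub ?_]
  · refine Finset.prod_congr rfl fun n hn => ?_
    rw [phiL_count, if_pos hn]
  · intro n _ hn
    rw [List.mem_toFinset] at hn
    have : (phiL D m).count n = 0 := List.count_eq_zero.mpr hn
    rw [this]
    simp

lemma const_eq (m : ℕ → ℕ) :
    (2 : K) ^ (∑ n ∈ oddF D, m n) * (∏ n ∈ oddF D, ((n : K) ^ (m n) * ((m n).factorial : K)))⁻¹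
      = ∏ n ∈ oddF D, (((m n).factorial : K)⁻¹ * (2 / (n : K)) ^ (m n)) := by
  rw [← Finset.prod_pow_eq_pow_sum, ← Finset.prod_inv_distrib, ← Finset.prod_mul_distrib]
  refine Finset.prod_congr rfl fun n _ => ?_
  rw [div_pow, mul_inv]
  ring

lemma qm_cauchyTerm (m : ℕ → ℕ) :
    qm M N D (cauchyTerm M N (phiP D m))
      = ∏ n ∈ oddF D, (algebraMap K (Rq M N D) (((m n).factorial : K)⁻¹) * (cR M N D n) ^ (m n)) := by
  have hl : (phiP D m).1 = phiL D m := rfl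
  rw [cauchyTerm, hl, map_mul, map_mul]
  rw [map_list_prod (qm M N D), map_list_prod (qm M N D), List.map_map, List.map_map]
  have hPB : ((phiL D m).map (⇑(qm M N D) ∘ fun n => pBeta M N n)).prod
      = ∏ n ∈ oddF D, (PB M N D n) ^ (m n) := phiL_map_prod D m _
  have hQB : ((phiL D m).map (⇑(qm M N D) ∘ fun n => pBracket M N n)).prod
      = ∏ n ∈ oddF D, (QB M N D n) ^ (m n) := phiL_map_prod D m _
  rw [hPB, hQB, qm_algebraMap]
  rw [phiL_length, zlam_phiL, const_eq, map_prod]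
  rw [← Finset.prod_mul_distrib, ← Finset.prod_mul_distrib]
  refine Finset.prod_congr rfl fun n hn => ?_
  rw [cR, mul_pow, mul_pow, ← map_pow, map_mul]
  ring

end ChainB3

section Final
variable (M N : ℕ)

lemma listProd_pBeta_mem (l : List ℕ) : ((l.map fun n => pBeta M N n).prod) ∈ od M N l.sum := by
  induction l with
  | nil =>
    intro e he
    rw [List.sum_nil] at he
    omega
  | cons a t ih =>
    rw [List.map_cons, List.prod_cons, List.sum_cons]
    exact mul_mem_od M N (pBeta_mem_od M N a) ih

lemma cauchyTerm_mem_od (lam : OddPartition) : cauchyTerm M N lam ∈ od M N lam.1.sum := by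
  rw [cauchyTerm]
  exact Ideal.mul_mem_right _ _ (Ideal.mul_mem_left _ _ (listProd_pBeta_mem M N lam.1))

lemma coeff_cauchyTerm_eq_zero (lam : OddPartition) (d : (Fin M ⊕ Fin N) →₀ ℕ)
    (h : deg M N d < lam.1.sum) : MvPowerSeries.coeff d (cauchyTerm M N lam) = 0 :=
  cauchyTerm_mem_od M N lam d h

lemma phiL_congr (D : ℕ) {m1 m2 : ℕ → ℕ} (h : ∀ n ∈ oddF D, m1 n = m2 n) :
    phiL D m1 = phiL D m2 := by
  rw [phiL, phiL]
  congr 1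
  refine List.map_congr_left fun n hn => ?_
  rw [oddLst, Finset.mem_sort] at hn
  rw [h n hn]

theorem cauchy_identity_powerSums' (hM : 1 ≤ M) (hN : 1 ≤ N)
    (d : (Fin M ⊕ Fin N) →₀ ℕ) :
    (Function.support fun lam : OddPartition =>
      MvPowerSeries.coeff d (cauchyTerm M N lam)).Finite ∧
    ∑ᶠ lam : OddPartition, MvPowerSeries.coeff d (cauchyTerm M N lam)
      = MvPowerSeries.coeff d (cauchyRHS M N) := by
  classical
  set D := deg M N d with hD
  set pis := (oddF D).pi (fun _ => Finset.range (D + 1)) with hpis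
  set Ψ : (∀ n ∈ oddF D, ℕ) → OddPartition :=
    fun p => phiP D (fun n => if h : n ∈ oddF D then p n h else 0) with hΨ
  set T : Finset OddPartition := pis.image Ψ with hT
  have hsupp : (Function.support fun lam : OddPartition =>
      MvPowerSeries.coeff d (cauchyTerm M N lam)) ⊆ ↑T := by
    intro lam hlam
    rw [Function.mem_support] at hlam
    have hsum : lam.1.sum ≤ D := by
      by_contra hc
      exact hlam (coeff_cauchyTerm_eq_zero M N lam d (by omega))
    have heq := eq_phiP D lam hsum
    rw [Finset.coe_image]
    refine ⟨fun n _ => lam.1.count n, ?_, ?_⟩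
    · rw [hpis, Finset.mem_coe, Finset.mem_pi]
      intro n hn
      rw [Finset.mem_range]
      have h1 : lam.1.count n ≤ lam.1.length := List.count_le_length
      have h2 : lam.1.length ≤ lam.1.sum :=
        length_le_sum_of_one_le lam.1 (fun a ha => by
          rcases lam.2.2 a ha with ⟨k, hk⟩; omega)
      omega
    · have : phiL D (fun n => if h : n ∈ oddF D then lam.1.count n else 0)
          = phiL D (fun n => lam.1.count n) := by
        refine phiL_congr D fun n hn => ?_
        rw [dif_pos hn]
      show Ψ (fun n _ => lam.1.count n) = lam
      have h2 : Ψ (fun n _ => lam.1.count n) = phiP D (fun n => lam.1.count n) :=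
        Subtype.ext this
      rw [h2]
      exact heq.symm
  constructor
  · exact Set.Finite.subset T.finite_toSet hsupp
  · rw [finsum_eq_sum_of_support_subset _ hsupp]
    rw [← map_sum (MvPowerSeries.coeff d)]
    refine coeff_eq_of_qm_eq M N D d rfl ?_
    rw [map_sum]
    have hinj : ∀ x ∈ pis, ∀ y ∈ pis, Ψ x = Ψ y → x = y := by
      intro x hx y hy hxy
      funext n hn
      have hcount := congrArg (fun lam : OddPartition => lam.1.count n) hxy
      simp only [hΨ] at hcount
      have h1 : (phiP D (fun n => if h : n ∈ oddF D then x n h else 0)).1.count n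
          = x n hn := by
        have : (phiP D (fun n => if h : n ∈ oddF D then x n h else 0)).1
            = phiL D (fun n => if h : n ∈ oddF D then x n h else 0) := rfl
        rw [this, phiL_count, if_pos hn, dif_pos hn]
      have h2 : (phiP D (fun n => if h : n ∈ oddF D then y n h else 0)).1.count n
          = y n hn := by
        have : (phiP D (fun n => if h : n ∈ oddF D then y n h else 0)).1
            = phiL D (fun n => if h : n ∈ oddF D then y n h else 0) := rfl
        rw [this, phiL_count, if_pos hn, dif_pos hn]
      rw [h1, h2] at hcount
      exact hcount
    rw [hT, Finset.sum_image hinj]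
    have hterm : ∀ p ∈ pis, qm M N D (cauchyTerm M N (Ψ p))
        = ∏ x ∈ (oddF D).attach,
            (algebraMap K (Rq M N D) (((p x.1 x.2).factorial : K)⁻¹) * (cR M N D x.1) ^ (p x.1 x.2)) := by
      intro p hp
      rw [hΨ, qm_cauchyTerm]
      rw [← Finset.prod_attach (oddF D)
        (fun n => algebraMap K (Rq M N D)
          ((((if h : n ∈ oddF D then p n h else 0)).factorial : K)⁻¹)
            * (cR M N D n) ^ ((if h : n ∈ oddF D then p n h else 0)))]
      refine Finset.prod_congr rfl fun x _ => ?_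
      rw [dif_pos x.2]
    rw [Finset.sum_congr rfl hterm]
    have hps := Finset.prod_sum (s := oddF D) (t := fun _ => Finset.range (D+1))
      (f := fun n k => algebraMap K (Rq M N D) ((k.factorial : K)⁻¹) * (cR M N D n) ^ k)
    rw [← hps]
    have : ∀ n ∈ oddF D, ∑ k ∈ Finset.range (D+1),
        (algebraMap K (Rq M N D) ((k.factorial : K)⁻¹) * (cR M N D n) ^ k)
        = texp D (cR M N D n) := fun n _ => rfl
    rw [Finset.prod_congr rfl this]
    rw [← texp_finset_sum D (I1_pow_eq_bot M N D) _ _ (fun n hn => cR_mem M N D n hn)]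
    rw [← qm_cauchyRHS]

end Final


theorem cauchy_identity_powerSums (hM : 1 ≤ M) (hN : 1 ≤ N)
    (d : (Fin M ⊕ Fin N) →₀ ℕ) :
    (Function.support fun lam : OddPartition =>
      MvPowerSeries.coeff d (cauchyTerm M N lam)).Finite ∧
    ∑ᶠ lam : OddPartition, MvPowerSeries.coeff d (cauchyTerm M N lam)
      = MvPowerSeries.coeff d (cauchyRHS M N) :=
  cauchy_identity_powerSums' M N hM hN d

end
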